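/- arXiv:1307.4302 — 4 statements merged into one kernel-verified Lean document; each statement's English description precedes it below -/
import Mathlib

section
/- Let D_i = [a_i, b_i] ⊆ ℝ^N be a hyperinterval, f differentiable on D_i with gradient K-Lipschitz on D_i, and let K̃ ≥ K. Define F_i = f(a_i) + min_{x ∈ D_i} ⟨f'(a_i), x − a_i⟩ and R_i(K̃) = F_i − (K̃/2)‖b_i − a_i‖². Then R_i(K̃) ≤ f(x) for all x ∈ D_i. -/
/-!
The descent lemma `f x ≥ f a + ⟪f' a, x - a⟫ - K/2 ‖x - a‖²`: along `γ t = a + t • (x - a)` the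
function `t ↦ f (γ t) - t ⟪f' a, x - a⟫ + K/2 t² ‖x - a‖²` has derivative
`⟪f' (γ t) - f' a, x - a⟫ + K t ‖x - a‖²`, which is nonnegative by Cauchy–Schwarz and
`‖f' (γ t) - f' a‖ ≤ K t ‖x - a‖`; so its values at `0` and `1` compare. The box is convex and
contains `a`, the linear term is at least its infimum `m` over the box, and `‖x - a‖ ≤ ‖b - a‖`
because each coordinate of `x` lies between those of `a` and `b`.
-/

open scoped RealInnerProductSpace

section DescentLemma

variable {E : Type*} [NormedAddCommGroup E] [InnerProductSpace ℝ E] [CompleteSpace E]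

theorem HasGradientAt.hasDerivAt_comp_add_smul {f : E → ℝ} {g a v : E} {t : ℝ}
    (hf : HasGradientAt f g (a + t • v)) :
    HasDerivAt (fun s : ℝ => f (a + s • v)) ⟪g, v⟫ t := by
  have hline : HasDerivAt (fun s : ℝ => a + s • v) v t := by
    simpa using ((hasDerivAt_id t).smul_const v).const_add a
  have := hf.hasFDerivAt.comp_hasDerivAt t hline
  simp only [InnerProductSpace.toDual_apply_apply] at this
  exact this

theorem add_inner_sub_sq_le_of_norm_gradient_sub_le {f : E → ℝ} {f' : E → E} {K : ℝ} {a x : E}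
    (hdiff : ∀ y ∈ segment ℝ a x, HasGradientAt f (f' y) y)
    (hlip : ∀ y ∈ segment ℝ a x, ‖f' y - f' a‖ ≤ K * ‖y - a‖) :
    f a + ⟪f' a, x - a⟫ - K / 2 * ‖x - a‖ ^ 2 ≤ f x := by
  set v := x - a
  have hmem : ∀ t ∈ Set.Icc (0 : ℝ) 1, a + t • v ∈ segment ℝ a x := fun t ht => by
    rw [segment_eq_image']; exact ⟨t, ht, rfl⟩
  set ψ : ℝ → ℝ := fun t => f (a + t • v) - t * ⟪f' a, v⟫ + K / 2 * ‖v‖ ^ 2 * t ^ 2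
  have hψ : ∀ t ∈ Set.Icc (0 : ℝ) 1,
      HasDerivAt ψ (⟪f' (a + t • v) - f' a, v⟫ + K * ‖v‖ ^ 2 * t) t := fun t ht => by
    have := (((hdiff _ (hmem t ht)).hasDerivAt_comp_add_smul).sub
      ((hasDerivAt_id t).mul_const ⟪f' a, v⟫)).add
      ((hasDerivAt_pow 2 t).const_mul (K / 2 * ‖v‖ ^ 2))
    refine this.congr_deriv ?_
    rw [inner_sub_left]
    ring
  have hψ_nonneg : ∀ t ∈ Set.Icc (0 : ℝ) 1, 0 ≤ ⟪f' (a + t • v) - f' a, v⟫ + K * ‖v‖ ^ 2 * t := by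
    intro t ht
    have hgrad : ‖f' (a + t • v) - f' a‖ ≤ K * t * ‖v‖ := by
      simpa [norm_smul, abs_of_nonneg ht.1, mul_assoc] using hlip _ (hmem t ht)
    have hcs := neg_le_of_abs_le (abs_real_inner_le_norm (f' (a + t • v) - f' a) v)
    nlinarith [mul_le_mul_of_nonneg_right hgrad (norm_nonneg v)]
  have hmono : MonotoneOn ψ (Set.Icc 0 1) :=
    monotoneOn_of_hasDerivWithinAt_nonneg (convex_Icc 0 1)
      (fun t ht => (hψ t ht).continuousAt.continuousWithinAt)
      (fun t ht => (hψ t (interior_subset ht)).hasDerivWithinAt)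
      (fun t ht => hψ_nonneg t (interior_subset ht))
  have h01 := hmono (Set.left_mem_Icc.2 zero_le_one) (Set.right_mem_Icc.2 zero_le_one) zero_le_one
  simp only [ψ, v, zero_smul, add_zero, zero_mul, sub_zero, ne_eq, OfNat.ofNat_ne_zero,
    not_false_eq_true, zero_pow, mul_zero, one_smul, add_sub_cancel, one_mul, one_pow,
    mul_one] at h01
  linarith

end DescentLemma

section Box

variable {ι : Type*}

theorem EuclideanSpace.norm_le_norm_of_forall_abs_le [Fintype ι] {x y : EuclideanSpace ℝ ι}
    (h : ∀ j, |x j| ≤ |y j|) : ‖x‖ ≤ ‖y‖ := by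
  simp only [EuclideanSpace.norm_eq, Real.norm_eq_abs]
  exact Real.sqrt_le_sqrt (Finset.sum_le_sum fun j _ => pow_le_pow_left₀ (abs_nonneg _) (h j) 2)

theorem EuclideanSpace.convex_setOf_forall_mem_uIcc (a b : EuclideanSpace ℝ ι) :
    Convex ℝ {x : EuclideanSpace ℝ ι | ∀ j, x j ∈ Set.uIcc (a j) (b j)} := by
  simp only [Set.ofPred_forall]
  exact convex_iInter fun j => (convex_uIcc (a j) (b j)).linear_preimage
    (EuclideanSpace.proj j : EuclideanSpace ℝ ι →L[ℝ] ℝ).toLinearMap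

theorem EuclideanSpace.norm_sub_left_le_of_forall_mem_uIcc [Fintype ι]
    {a b x : EuclideanSpace ℝ ι} (hx : ∀ j, x j ∈ Set.uIcc (a j) (b j)) : ‖x - a‖ ≤ ‖b - a‖ :=
  norm_le_norm_of_forall_abs_le fun j => Set.abs_sub_left_of_mem_uIcc (hx j)

end Box

theorem characteristic_is_lower_bound
    (N : ℕ) (a b : EuclideanSpace ℝ (Fin N))
    (D : Set (EuclideanSpace ℝ (Fin N)))
    (hD : D = {x | ∀ j, min (a j) (b j) ≤ x j ∧ x j ≤ max (a j) (b j)})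
    (f : EuclideanSpace ℝ (Fin N) → ℝ)
    (f' : EuclideanSpace ℝ (Fin N) → EuclideanSpace ℝ (Fin N))
    (K Ktilde : ℝ) (hK : 0 < K) (hKt : K ≤ Ktilde)
    (hdiff : ∀ x ∈ D, HasGradientAt f (f' x) x)
    (hlip : ∀ x ∈ D, ∀ y ∈ D, ‖f' x - f' y‖ ≤ K * ‖x - y‖)
    (m : ℝ) (hm : IsGLB ((fun x => ⟪f' a, x - a⟫) '' D) m)
    (F R : ℝ) (hF : F = f a + m) (hR : R = F - Ktilde / 2 * ‖b - a‖ ^ 2) :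
    ∀ x ∈ D, R ≤ f x := by
  intro x hx
  replace hD : D = {x | ∀ j, x j ∈ Set.uIcc (a j) (b j)} := hD
  have haD : a ∈ D := hD ▸ fun j => Set.left_mem_uIcc
  have hseg : segment ℝ a x ⊆ D :=
    (hD ▸ EuclideanSpace.convex_setOf_forall_mem_uIcc a b).segment_subset haD hx
  have hdescent := add_inner_sub_sq_le_of_norm_gradient_sub_le
    (fun y hy => hdiff y (hseg hy)) (fun y hy => hlip y (hseg hy) a haD)
  have hm_le : m ≤ ⟪f' a, x - a⟫ := hm.1 ⟨x, hx, rfl⟩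
  have hdist : ‖x - a‖ ≤ ‖b - a‖ :=
    EuclideanSpace.norm_sub_left_le_of_forall_mem_uIcc (by rw [hD] at hx; exact hx)
  have hquad : K / 2 * ‖x - a‖ ^ 2 ≤ Ktilde / 2 * ‖b - a‖ ^ 2 := by
    gcongr
    linarith
  subst hF hR
  linarith
end

section
/- Let D_t ⊆ ℝ^N be a hyperinterval with squared diagonal d² and suppose it is trisected perpendicularly to its longest side. Then each child hyperinterval has squared diagonal at most (1 − 8/(9N))·d². Consequently the diagonal of each child is at most √(1 − 8/(9N)) times the diagonal of D_t. -/
open Finset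

theorem Finset.sum_ite_eq_sub_add {ι M : Type*} [Fintype ι] [DecidableEq ι] [AddCommGroup M]
    (f : ι → M) (t : ι) (a : M) :
    ∑ j, (if j = t then a else f j) = ∑ j, f j - f t + a := by
  rw [← sum_erase_add _ _ (mem_univ t), ← sum_erase_add _ f (mem_univ t),
    sum_congr rfl fun j hj => if_neg (ne_of_mem_erase hj), if_pos rfl]
  abel

theorem sum_sq_le_card_mul_sq {ι : Type*} [Fintype ι] (w : ι → ℝ) (m : ℝ)
    (hw : ∀ j, 0 ≤ w j) (hm : ∀ j, w j ≤ m) :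
    ∑ j, w j ^ 2 ≤ Fintype.card ι * m ^ 2 := by
  simpa using sum_le_card_nsmul univ (fun j => w j ^ 2) (m ^ 2) fun j _ =>
    pow_le_pow_left₀ (hw j) (hm j) 2

theorem sub_mul_sq_le_one_sub_div_mul {n S m c : ℝ} (hn : 0 < n) (hc : 0 ≤ c)
    (hS : S ≤ n * m ^ 2) :
    S - c * m ^ 2 ≤ (1 - c / n) * S := by
  have : c / n * S ≤ c * m ^ 2 := by
    rw [div_mul_eq_mul_div, div_le_iff₀ hn]
    nlinarith
  linarith

theorem trisected_child_diagonal_shrinks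
    (N : ℕ) (w : Fin N → ℝ) (t : Fin N)
    (hw : ∀ j, 0 ≤ w j) (hmax : ∀ j, w j ≤ w t) :
    (∑ j, (if j = t then w t / 3 else w j) ^ 2
        ≤ (1 - 8 / (9 * (N : ℝ))) * ∑ j, (w j) ^ 2) ∧
    Real.sqrt (∑ j, (if j = t then w t / 3 else w j) ^ 2)
        ≤ Real.sqrt (1 - 8 / (9 * (N : ℝ))) * Real.sqrt (∑ j, (w j) ^ 2) := by
  have child : ∑ j, (if j = t then w t / 3 else w j) ^ 2 = ∑ j, w j ^ 2 - 8 / 9 * w t ^ 2 := by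
    simp_rw [apply_ite (· ^ 2)]
    rw [sum_ite_eq_sub_add]
    ring
  have parent : ∑ j, w j ^ 2 ≤ N * w t ^ 2 := by
    simpa using sum_sq_le_card_mul_sq w (w t) hw hmax
  have shrink : ∑ j, (if j = t then w t / 3 else w j) ^ 2
      ≤ (1 - 8 / (9 * (N : ℝ))) * ∑ j, w j ^ 2 := by
    rw [child, ← div_div]
    exact sub_mul_sq_le_one_sub_div_mul (by exact_mod_cast t.pos) (by norm_num) parent
  refine ⟨shrink, ?_⟩
  rw [← Real.sqrt_mul' _ (by positivity)]
  exact Real.sqrt_le_sqrt shrink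
end

section
/- Consider a sequence of partitions of a hypercube D ⊆ ℝ^N produced by repeatedly trisecting hyperintervals perpendicularly to a longest side. If along any chain of nested hyperintervals D ⊇ D^{(1)} ⊇ D^{(2)} ⊇ … each D^{(k+1)} is a child of D^{(k)} under such a trisection, then the diagonal length of D^{(k)} tends to 0 as k → ∞; in fact it is bounded by (1 − 8/(9N))^{k/2} times the diagonal of D. -/
/-!
Trisecting a longest side `w_i` of a box replaces `w_i²` by `w_i² / 9`, so the squared diagonal
loses `8/9 · w_i²`. A longest side's square is at least the mean `(∑ w_j²) / N` of the squared
sides, hence each step multiplies the squared diagonal by at most `1 - 8 / (9N) < 1`, and the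
diagonal decays geometrically with ratio `√(1 - 8 / (9N))`.
-/

open Filter

section Trisection

variable {ι : Type*} [Fintype ι]

theorem sum_sq_le_card_mul_sq_s9 {v : ι → ℝ} {i : ι} (h0 : ∀ j, 0 ≤ v j) (hmax : ∀ j, v j ≤ v i) :
    ∑ j, v j ^ 2 ≤ Fintype.card ι * v i ^ 2 := by
  simpa using Finset.sum_le_sum fun j (_ : j ∈ Finset.univ) => pow_le_pow_left₀ (h0 j) (hmax j) 2

variable [DecidableEq ι]

theorem sum_sq_update (v : ι → ℝ) (i : ι) (x : ℝ) :
    ∑ j, Function.update v i x j ^ 2 = ∑ j, v j ^ 2 - v i ^ 2 + x ^ 2 := by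
  rw [← Finset.add_sum_erase _ _ (Finset.mem_univ i), ← Finset.add_sum_erase _ _ (Finset.mem_univ i)]
  rw [Finset.sum_congr rfl fun j hj => by rw [Function.update_of_ne (Finset.ne_of_mem_erase hj)]]
  simp only [Function.update_self]
  ring

theorem sum_sq_trisect_longest_le {v : ι → ℝ} {i : ι} (h0 : ∀ j, 0 ≤ v j)
    (hmax : ∀ j, v j ≤ v i) :
    ∑ j, Function.update v i (v i / 3) j ^ 2 ≤ (1 - 8 / (9 * Fintype.card ι)) * ∑ j, v j ^ 2 := by
  have hcard : (0 : ℝ) < Fintype.card ι := by exact_mod_cast Fintype.card_pos_iff.mpr ⟨i⟩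
  have hmean : (∑ j, v j ^ 2) / Fintype.card ι ≤ v i ^ 2 := by
    rw [div_le_iff₀ hcard]
    linarith [sum_sq_le_card_mul_sq_s9 h0 hmax]
  calc ∑ j, Function.update v i (v i / 3) j ^ 2 = ∑ j, v j ^ 2 - 8 / 9 * v i ^ 2 := by
        rw [sum_sq_update]; ring
    _ ≤ ∑ j, v j ^ 2 - 8 / 9 * ((∑ j, v j ^ 2) / Fintype.card ι) := by linarith
    _ = (1 - 8 / (9 * Fintype.card ι)) * ∑ j, v j ^ 2 := by field_simp

theorem sqrt_sum_sq_trisect_longest_le {v : ι → ℝ} {i : ι} (h0 : ∀ j, 0 ≤ v j)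
    (hmax : ∀ j, v j ≤ v i) :
    Real.sqrt (∑ j, Function.update v i (v i / 3) j ^ 2) ≤
      Real.sqrt (1 - 8 / (9 * Fintype.card ι)) * Real.sqrt (∑ j, v j ^ 2) := by
  rw [← Real.sqrt_mul' _ (Finset.sum_nonneg fun j _ => sq_nonneg (v j))]
  exact Real.sqrt_le_sqrt (sum_sq_trisect_longest_le h0 hmax)

end Trisection

theorem nested_trisection_diagonals_tend_to_zero_general
    (N : ℕ)
    (a b : ℕ → (Fin N → ℝ))
    (w : ℕ → Fin N → ℝ) (hw : ∀ k j, w k j = |b k j - a k j|)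
    (hstep : ∀ k, ∃ i : Fin N,
        (∀ j, w k j ≤ w k i) ∧
        (∀ j, w (k + 1) j = if j = i then w k i / 3 else w k j))
    (diag : ℕ → ℝ) (hdiag : ∀ k, diag k = Real.sqrt (∑ j, (w k j) ^ 2)) :
    (∀ k, diag k ≤ Real.sqrt (1 - 8 / (9 * (N : ℝ))) ^ k * diag 0) ∧
    Tendsto diag atTop (nhds 0) := by
  set r := Real.sqrt (1 - 8 / (9 * (N : ℝ)))
  have hdecay : ∀ k, diag (k + 1) ≤ r * diag k := by
    intro k
    obtain ⟨i, hmax, hupd⟩ := hstep k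
    have hnonneg : ∀ j, 0 ≤ w k j := fun j => (hw k j).symm ▸ abs_nonneg _
    have hnext : w (k + 1) = Function.update (w k) i (w k i / 3) :=
      funext fun j => by rw [hupd, Function.update_apply]
    simpa [hdiag, hnext] using sqrt_sum_sq_trisect_longest_le hnonneg hmax
  have hbound : ∀ k, diag k ≤ r ^ k * diag 0 := fun k =>
    le_geom (Real.sqrt_nonneg _) k fun m _ => hdecay m
  refine ⟨hbound, squeeze_zero (fun k => (hdiag k) ▸ Real.sqrt_nonneg _) hbound ?_⟩
  obtain ⟨i, -⟩ := hstep 0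
  have hNpos : (0 : ℝ) < N := by exact_mod_cast i.pos
  have hr : r < 1 := by
    have : 0 < 8 / (9 * (N : ℝ)) := by positivity
    exact (Real.sqrt_lt' one_pos).2 (by linarith)
  simpa using (tendsto_pow_atTop_nhds_zero_of_lt_one (Real.sqrt_nonneg _) hr).mul_const (diag 0)

theorem nested_trisection_diagonals_tend_to_zero
    (N : ℕ) (hN : 0 < N)
    (a b : ℕ → (Fin N → ℝ))
    (w : ℕ → Fin N → ℝ) (hw : ∀ k j, w k j = |b k j - a k j|)
    (hstep : ∀ k, ∃ i : Fin N,
        (∀ j, w k j ≤ w k i) ∧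
        (∀ j, w (k + 1) j = if j = i then w k i / 3 else w k j))
    (diag : ℕ → ℝ) (hdiag : ∀ k, diag k = Real.sqrt (∑ j, (w k j) ^ 2)) :
    (∀ k, diag k ≤ Real.sqrt (1 - 8 / (9 * (N : ℝ))) ^ k * diag 0) ∧
    Tendsto diag atTop (nhds 0) :=
  nested_trisection_diagonals_tend_to_zero_general N a b w hw hstep diag hdiag
end

section
/- Let {(d_i, F_i)}_{i=1}^m with d_i > 0 represent a finite partition, and let t be an index such that d_t = max_i d_i and F_t ≤ F_j for every j with d_j = d_t. Then the hyperinterval D_t is nondominated in the sense that there exists K̃ > 0 with R_t(K̃) ≤ R_j(K̃) for all j, where R_i(K̃) = F_i − K̃ d_i. -/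
/-! Each condition `F t - K d t ≤ F j - K d j` reads `F t - F j ≤ K (d t - d j)` with
`d t - d j ≥ 0`, so it holds for all large `K` (for every `K` when `d j = d t`); finitely many
such conditions hold simultaneously for all large `K`. -/

open Filter

lemma eventually_sub_mul_le_sub_mul {a b x y : ℝ} (hy : y ≤ b) (hx : y = b → a ≤ x) :
    ∀ᶠ K in atTop, a - K * b ≤ x - K * y := by
  rcases hy.eq_or_lt with rfl | hlt
  · exact .of_forall fun K => by linarith [hx rfl]
  · filter_upwards [eventually_ge_atTop ((a - x) / (b - y))] with K hK
    have : a - x ≤ K * (b - y) := (div_le_iff₀ (sub_pos.2 hlt)).1 hK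
    linarith

theorem largest_with_smallest_F_is_nondominated_general
    (m : ℕ) (F d : Fin m → ℝ)
    (t : Fin m) (hmax : ∀ j, d j ≤ d t)
    (hmin : ∀ j, d j = d t → F t ≤ F j) :
    ∃ Ktilde > 0, ∀ j,
      F t - Ktilde * d t ≤ F j - Ktilde * d j :=
  ((eventually_gt_atTop 0).and
    (eventually_all.2 fun j => eventually_sub_mul_le_sub_mul (hmax j) (hmin j))).exists

theorem largest_with_smallest_F_is_nondominated
    (m : ℕ) (F d : Fin m → ℝ) (hd : ∀ i, 0 < d i)
    (t : Fin m) (hmax : ∀ j, d j ≤ d t)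
    (hmin : ∀ j, d j = d t → F t ≤ F j) :
    ∃ Ktilde > 0, ∀ j,
      F t - Ktilde * d t ≤ F j - Ktilde * d j :=
  largest_with_smallest_F_is_nondominated_general m F d t hmax hmin
end
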